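/- Let Φ be a spiking neural network on a network graph G=(V,E) in which every edge (u,v) carries a synaptic weight w_{(u,v)} ≥ 0 and a synaptic delay d_{(u,v)} ≥ 0, every response function equals the ReLU ρ(t)=max{t,0}, and for every node v ∈ V∖V_in there exists an edge (u,v) ∈ E with w_{(u,v)} > 0. Then for any assignment of input spike times t_u ∈ ℝ for u ∈ V_in, the potentials P_v(t) = Σ_{(u,v)∈E} w_{(u,v)} ρ(t − t_u − d_{(u,v)}) and the spike times t_v = min{t ∈ ℝ : P_v(t) = 1} are well-defined for all v ∈ V∖V_in; in particular the set {t ∈ ℝ : P_v(t) = 1} is nonempty and its minimum exists and is unique. -/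

import Mathlib

open scoped BigOperators

noncomputable section

/-- The ReLU function. -/
def relu (t : ℝ) : ℝ := max t 0

/-- A network graph: a finite directed acyclic graph without isolated nodes. -/
structure NetworkGraph (V : Type) [Fintype V] [DecidableEq V] where
  E : Finset (V × V)
  acyclic : WellFounded (fun u v : V => (u, v) ∈ E)
  noIsolated : ∀ v : V, (∃ u, (u, v) ∈ E) ∨ (∃ u, (v, u) ∈ E)

variable {V : Type} [Fintype V] [DecidableEq V]

/-- Input nodes: nodes with no incoming edges. -/
def NetworkGraph.Vin (G : NetworkGraph V) : Set V := {v | ∀ u, (u, v) ∉ G.E}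

/-- Output nodes: nodes with no outgoing edges. -/
def NetworkGraph.Vout (G : NetworkGraph V) : Set V := {v | ∀ u, (v, u) ∉ G.E}

/-- There exists a directed path with `n` edges in `G`. -/
def NetworkGraph.HasPathLen (G : NetworkGraph V) (n : ℕ) : Prop :=
  ∃ p : Fin (n + 1) → V, ∀ i : Fin n, (p i.castSucc, p i.succ) ∈ G.E

/-- The graph depth (length of the longest directed path) of `G` equals `L`. -/
def NetworkGraph.DepthEq (G : NetworkGraph V) (L : ℕ) : Prop :=
  G.HasPathLen L ∧ ∀ n : ℕ, G.HasPathLen n → n ≤ L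

/-- The potential of node `v` at time `s`, given presynaptic spike times `t`,
weights `w` and delays `d`. -/
def potential (G : NetworkGraph V) (w d : V × V → ℝ) (t : V → ℝ) (v : V) (s : ℝ) : ℝ :=
  ∑ u ∈ Finset.univ.filter (fun u => (u, v) ∈ G.E), w (u, v) * relu (s - t u - d (u, v))

/-- `t` is a consistent assignment of spike times extending the input spike times `tin`:
on input nodes it agrees with `tin`, and at every non-input node `v` the spike time `t v`
is the minimum (which exists) of the set of times at which the potential reaches `1`. -/
def IsSpikeMap (G : NetworkGraph V) (w d : V × V → ℝ) (tin : V → ℝ) (t : V → ℝ) : Prop :=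
  (∀ v ∈ G.Vin, t v = tin v) ∧
  ∀ v : V, v ∉ G.Vin → IsLeast {s : ℝ | potential G w d t v s = 1} (t v)

open Classical in
/-- The spike-time assignment determined by the input spike times `tin` (via choice). -/
def spikeMap (G : NetworkGraph V) (w d : V × V → ℝ) (tin : V → ℝ) : V → ℝ :=
  if h : ∃ t, IsSpikeMap G w d tin t then h.choose else fun _ => 0

/-- Realization of a (positive) SNN, given enumerations of input and output nodes. -/
def snnReal (G : NetworkGraph V) (w d : V × V → ℝ) {din dout : ℕ}
    (ein : Fin din → V) (eout : Fin dout → V) (x : Fin din → ℝ) : Fin dout → ℝ :=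
  fun j => spikeMap G w d (Function.extend ein x (fun _ => 0)) (eout j)

/-- Frobenius norm of a real matrix. -/
def frobNorm {m n : ℕ} (A : Matrix (Fin m) (Fin n) ℝ) : ℝ :=
  Real.sqrt (∑ i, ∑ j, (A i j) ^ 2)

/-- Realization of an affine SNN: affine encoder, positive SNN, affine decoder. -/
def affineReal (G : NetworkGraph V) (w d : V × V → ℝ) {din dout d0 d1 : ℕ}
    (ein : Fin din → V) (eout : Fin dout → V)
    (Win : Matrix (Fin din) (Fin d0) ℝ) (bin : Fin din → ℝ)
    (Wout : Matrix (Fin d1) (Fin dout) ℝ) (bout : Fin d1 → ℝ)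
    (x : Fin d0 → ℝ) : Fin d1 → ℝ :=
  Wout.mulVec (snnReal G w d ein eout (Win.mulVec x + bin)) + bout

/-- ℓ∞ distance of the parameters (weights and delays) of two SNNs on the same graph. -/
def paramDist (G : NetworkGraph V) (w d w' d' : V × V → ℝ) : ℝ :=
  sSup ((fun e => max |w e - w' e| |d e - d' e|) '' (G.E : Set (V × V)))

/-- An affine spiking neural network with input dimension `d0` and output dimension `d1`:
a positive SNN together with enumerations of its input/output nodes and an affine
encoder/decoder pair. -/
structure AffSNN (d0 d1 : ℕ) where
  n : ℕ
  din : ℕ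
  dout : ℕ
  G : NetworkGraph (Fin n)
  w : Fin n × Fin n → ℝ
  dl : Fin n × Fin n → ℝ
  ein : Fin din → Fin n
  eout : Fin dout → Fin n
  Win : Matrix (Fin din) (Fin d0) ℝ
  bin : Fin din → ℝ
  Wout : Matrix (Fin d1) (Fin dout) ℝ
  bout : Fin d1 → ℝ
  w_pos : ∀ e ∈ G.E, 0 < w e
  dl_nonneg : ∀ e ∈ G.E, 0 ≤ dl e
  ein_inj : Function.Injective ein
  ein_range : Set.range ein = G.Vin
  eout_inj : Function.Injective eout
  eout_range : Set.range eout = G.Vout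

/-- Realization of an affine SNN. -/
def AffSNN.real {d0 d1 : ℕ} (Ψ : AffSNN d0 d1) : (Fin d0 → ℝ) → Fin d1 → ℝ :=
  affineReal Ψ.G Ψ.w Ψ.dl Ψ.ein Ψ.eout Ψ.Win Ψ.bin Ψ.Wout Ψ.bout

/-- Size of an affine SNN: the number of nonzero scalar entries of
`(W, D, W_in, W_out, b_in, b_out)`. -/
def AffSNN.size {d0 d1 : ℕ} (Ψ : AffSNN d0 d1) : ℕ :=
  {e | e ∈ Ψ.G.E ∧ Ψ.w e ≠ 0}.ncard + {e | e ∈ Ψ.G.E ∧ Ψ.dl e ≠ 0}.ncard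
    + {p : Fin Ψ.din × Fin d0 | Ψ.Win p.1 p.2 ≠ 0}.ncard
    + {p : Fin d1 × Fin Ψ.dout | Ψ.Wout p.1 p.2 ≠ 0}.ncard
    + {i : Fin Ψ.din | Ψ.bin i ≠ 0}.ncard + {i : Fin d1 | Ψ.bout i ≠ 0}.ncard

/-- All scalar weights of the affine SNN are bounded above in absolute value by `C`. -/
def AffSNN.weightsBddAbove {d0 d1 : ℕ} (Ψ : AffSNN d0 d1) (C : ℝ) : Prop :=
  (∀ e ∈ Ψ.G.E, |Ψ.w e| ≤ C) ∧ (∀ e ∈ Ψ.G.E, |Ψ.dl e| ≤ C) ∧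
  (∀ i j, |Ψ.Win i j| ≤ C) ∧ (∀ i, |Ψ.bin i| ≤ C) ∧
  (∀ i j, |Ψ.Wout i j| ≤ C) ∧ (∀ i, |Ψ.bout i| ≤ C)

/-- All synaptic weights of the affine SNN are bounded below by `c`. -/
def AffSNN.synBddBelow {d0 d1 : ℕ} (Ψ : AffSNN d0 d1) (c : ℝ) : Prop :=
  ∀ e ∈ Ψ.G.E, c ≤ Ψ.w e

/-- Clipping to the interval `[0,1]`. -/
def clip01 (y : ℝ) : ℝ := max 0 (min 1 y)

/-- The hypothesis class of `[0,1]`-clipped realizations of affine SNNs on a fixed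
network graph with parameters bounded as in `P*_SNN(G, d⃗; b, B)` (with `d1 = 1`). -/
def clippedClass (G : NetworkGraph V) {din dout : ℕ} (ein : Fin din → V) (eout : Fin dout → V)
    (b B : ℝ) (d0 : ℕ) : Set ((Fin d0 → ℝ) → ℝ) :=
  { f | ∃ (Win : Matrix (Fin din) (Fin d0) ℝ) (bin : Fin din → ℝ)
        (w dl : V × V → ℝ) (Wout : Matrix (Fin 1) (Fin dout) ℝ) (bout : Fin 1 → ℝ),
      (∀ i j, Win i j ∈ Set.Icc (-B) B) ∧ (∀ i, bin i ∈ Set.Icc (-B) B) ∧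
      (∀ e ∈ G.E, w e ∈ Set.Icc b B) ∧ (∀ e ∈ G.E, dl e ∈ Set.Icc 0 B) ∧
      (∀ i j, Wout i j ∈ Set.Icc (-B) B) ∧ (∀ i, bout i ∈ Set.Icc (-B) B) ∧
      f = fun x => clip01 (affineReal G w dl ein eout Win bin Wout bout x 0) }

/-- The Lipschitz constant `L*` from the covering-number estimate. -/
def Lstar (d0 din dout L : ℕ) (b B : ℝ) : ℝ :=
  (dout : ℝ) * (2 * Real.sqrt din * d0 * B + B * L * (1 + 1 / b ^ 2)
    + 2 * B + L * (1 / b + B)) + 1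

/-- A regular triangulation of a compact set `Ω ⊆ ℝ^{d0}`, with simplices recorded by
their vertex sets. -/
structure RegTriangulation (d0 : ℕ) (Ω : Set (Fin d0 → ℝ)) where
  nodes : Finset (Fin d0 → ℝ)
  faces : Finset (Finset (Fin d0 → ℝ))
  nodes_sub : (nodes : Set (Fin d0 → ℝ)) ⊆ Ω
  card_face : ∀ S ∈ faces, S.card = d0 + 1
  indep : ∀ S ∈ faces, AffineIndependent ℝ ((↑) : {x // x ∈ S} → (Fin d0 → ℝ))
  face_nodes : ∀ S ∈ faces,
    (nodes : Set (Fin d0 → ℝ)) ∩ convexHull ℝ (S : Set (Fin d0 → ℝ)) = (S : Set (Fin d0 → ℝ))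
  cover : Ω = ⋃ S ∈ faces, convexHull ℝ (S : Set (Fin d0 → ℝ))
  inter : ∀ S ∈ faces, ∀ S' ∈ faces,
    convexHull ℝ (S : Set (Fin d0 → ℝ)) ∩ convexHull ℝ (S' : Set (Fin d0 → ℝ))
      = convexHull ℝ ((S ∩ S' : Finset (Fin d0 → ℝ)) : Set (Fin d0 → ℝ))

/-- Euclidean distance on `ℝ^{d0}` (realized as `Fin d0 → ℝ`). -/
def eudist {d0 : ℕ} (x y : Fin d0 → ℝ) : ℝ := Real.sqrt (∑ i, (x i - y i) ^ 2)

/-- Minimal mesh size: the minimal distance between two distinct nodes of a simplex. -/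
def hmin {d0 : ℕ} {Ω : Set (Fin d0 → ℝ)} (T : RegTriangulation d0 Ω) : ℝ :=
  sInf { r | ∃ S ∈ T.faces, ∃ x ∈ S, ∃ y ∈ S, x ≠ y ∧ r = eudist x y }

/-- Maximal mesh size: the maximal distance between two nodes of a simplex. -/
def hmax {d0 : ℕ} {Ω : Set (Fin d0 → ℝ)} (T : RegTriangulation d0 Ω) : ℝ :=
  sSup { r | ∃ S ∈ T.faces, ∃ x ∈ S, ∃ y ∈ S, r = eudist x y }

/-- `f` belongs to the linear finite element space `V_T`: it is continuous on `Ω` and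
affine on each simplex of `T`. -/
def PiecewiseAffineOn {d0 : ℕ} {Ω : Set (Fin d0 → ℝ)} (T : RegTriangulation d0 Ω)
    (f : (Fin d0 → ℝ) → ℝ) : Prop :=
  ContinuousOn f Ω ∧ ∀ S ∈ T.faces, ∃ (a : Fin d0 → ℝ) (c : ℝ),
    ∀ x ∈ convexHull ℝ (S : Set (Fin d0 → ℝ)), f x = ∑ i, a i * x i + c

/-- Admissibility of a compact domain: existence of quasi-uniform triangulations. -/
def Admissible (d0 : ℕ) (Ω : Set (Fin d0 → ℝ)) : Prop :=
  ∃ C1 C2 c2 : ℝ, 0 < C1 ∧ 0 < C2 ∧ 0 < c2 ∧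
    ∀ N : ℕ, 0 < N → ∃ T : RegTriangulation d0 Ω,
      (T.faces.card : ℝ) ≤ C1 * N ∧
      c2 * (N : ℝ) ^ (-(1 : ℝ) / d0) ≤ hmin T ∧
      hmin T ≤ hmax T ∧
      hmax T ≤ C2 * (N : ℝ) ^ (-(1 : ℝ) / d0)

/-- The `W^{s,∞}(Ω)` norm (for `C^s` functions): supremum over `Ω` of the norms of the
iterated derivatives of order at most `s`. -/
def sobNorm {d0 : ℕ} (s : ℕ) (Ω : Set (Fin d0 → ℝ)) (f : (Fin d0 → ℝ) → ℝ) : ℝ :=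
  sSup { r | ∃ k ≤ s, ∃ x ∈ Ω, r = ‖iteratedFDeriv ℝ k f x‖ }

/-- The `L^∞(Ω)` norm. -/
def supNormOn {d0 : ℕ} (Ω : Set (Fin d0 → ℝ)) (f : (Fin d0 → ℝ) → ℝ) : ℝ :=
  sSup ((fun x => |f x|) '' Ω)

/-- The Barron class `Γ_K`. -/
def BarronClass (d0 : ℕ) (K : ℝ) (f : (Fin d0 → ℝ) → ℝ) : Prop :=
  MeasureTheory.LocallyIntegrable f MeasureTheory.volume ∧
  ∃ g : (Fin d0 → ℝ) → ℂ, Measurable g ∧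
    (∀ x, (f x : ℂ) = ∫ ξ, Complex.exp (Complex.I * ((∑ i, x i * ξ i : ℝ) : ℂ)) * g ξ) ∧
    (∫ ξ, eudist ξ 0 * ‖g ξ‖) ≤ K

/-! The potential `P_v` is continuous, vanishes until the first presynaptic spike arrives, and
reaches `1` through the synapse of positive weight, so `{s | P_v s = 1}` is closed, nonempty and
bounded below and has a least element. Spike times are therefore obtained by well-founded
recursion along the acyclic edge relation, and they are unique by well-founded induction,
because `P_v` only depends on the spike times of the presynaptic nodes of `v`. -/

theorem potential_congr (G : NetworkGraph V) (w d : V × V → ℝ) {t t' : V → ℝ} {v : V}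
    (h : ∀ u, (u, v) ∈ G.E → t u = t' u) : potential G w d t v = potential G w d t' v := by
  funext s
  refine Finset.sum_congr rfl fun u hu => ?_
  rw [h u (Finset.mem_filter.mp hu).2]

theorem continuous_potential (G : NetworkGraph V) (w d : V × V → ℝ) (t : V → ℝ) (v : V) :
    Continuous (potential G w d t v) := by
  unfold potential relu
  fun_prop

theorem potential_eq_zero_of_forall_le (G : NetworkGraph V) (w d : V × V → ℝ) (t : V → ℝ)
    {v : V} {s : ℝ} (h : ∀ u, (u, v) ∈ G.E → s ≤ t u + d (u, v)) :
    potential G w d t v s = 0 := by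
  refine Finset.sum_eq_zero fun u hu => ?_
  have hle := h u (Finset.mem_filter.mp hu).2
  rw [relu, max_eq_right (by linarith), mul_zero]

theorem le_potential_of_mem (G : NetworkGraph V) {w : V × V → ℝ} (d : V × V → ℝ)
    (hw : ∀ e ∈ G.E, 0 ≤ w e) (t : V → ℝ) {u v : V} (huv : (u, v) ∈ G.E) (s : ℝ) :
    w (u, v) * relu (s - t u - d (u, v)) ≤ potential G w d t v s :=
  Finset.single_le_sum (f := fun u => w (u, v) * relu (s - t u - d (u, v)))
    (fun _ hu' => mul_nonneg (hw _ (Finset.mem_filter.mp hu').2) (le_max_right _ _))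
    (Finset.mem_filter.mpr ⟨Finset.mem_univ u, huv⟩)

theorem exists_isLeast_of_continuous {f : ℝ → ℝ} (hf : Continuous f) {a b c : ℝ} (hab : a ≤ b)
    (hc : c ∈ Set.Icc (f a) (f b)) (hlt : ∀ x < a, f x ≠ c) :
    ∃ s, IsLeast {x | f x = c} s := by
  obtain ⟨x, -, hx⟩ := intermediate_value_Icc hab hf.continuousOn hc
  have hbdd : BddBelow {x | f x = c} := ⟨a, fun y hy => not_lt.mp fun h => hlt y h hy⟩
  exact ⟨_, (isClosed_eq hf continuous_const).isLeast_csInf ⟨x, hx⟩ hbdd⟩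

theorem exists_isLeast_potential_eq_one (G : NetworkGraph V) {w : V × V → ℝ}
    (d : V × V → ℝ) (hw : ∀ e ∈ G.E, 0 ≤ w e) {u₀ v : V} (hu₀ : (u₀, v) ∈ G.E)
    (hw₀ : 0 < w (u₀, v)) (t : V → ℝ) :
    ∃ s, IsLeast {s | potential G w d t v s = 1} s := by
  classical
  have hu₀F : u₀ ∈ Finset.univ.filter fun u => (u, v) ∈ G.E :=
    Finset.mem_filter.mpr ⟨Finset.mem_univ _, hu₀⟩
  -- the first arrival time of a presynaptic spike at `v`
  set m := (Finset.univ.filter fun u => (u, v) ∈ G.E).inf' ⟨u₀, hu₀F⟩ fun u => t u + d (u, v)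
  have hzero : ∀ s ≤ m, potential G w d t v s = 0 := fun s hs =>
    potential_eq_zero_of_forall_le G w d t fun u hu =>
      hs.trans <| Finset.inf'_le (fun u => t u + d (u, v)) <|
        Finset.mem_filter.mpr ⟨Finset.mem_univ u, hu⟩
  set s₁ := max m (t u₀ + d (u₀, v) + 1 / w (u₀, v))
  have hone : 1 ≤ potential G w d t v s₁ := by
    have harg : 1 / w (u₀, v) ≤ s₁ - t u₀ - d (u₀, v) := by
      linarith [le_max_right m (t u₀ + d (u₀, v) + 1 / w (u₀, v))]
    calc (1 : ℝ) = w (u₀, v) * (1 / w (u₀, v)) := by field_simp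
      _ ≤ w (u₀, v) * relu (s₁ - t u₀ - d (u₀, v)) :=
        mul_le_mul_of_nonneg_left (harg.trans (le_max_left _ _)) hw₀.le
      _ ≤ potential G w d t v s₁ := le_potential_of_mem G d hw t hu₀ s₁
  refine exists_isLeast_of_continuous (continuous_potential G w d t v) (le_max_left _ _)
    ⟨by rw [hzero m le_rfl]; norm_num, hone⟩ fun x hx => ?_
  rw [hzero x hx.le]
  norm_num

theorem IsSpikeMap.unique (G : NetworkGraph V) {w d : V × V → ℝ} {tin t t' : V → ℝ}
    (ht : IsSpikeMap G w d tin t) (ht' : IsSpikeMap G w d tin t') : t = t' := by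
  funext v
  induction v using G.acyclic.induction with
  | _ v ih =>
    by_cases hv : v ∈ G.Vin
    · rw [ht.1 v hv, ht'.1 v hv]
    · have h := ht.2 v hv
      rw [potential_congr G w d ih] at h
      exact h.unique (ht'.2 v hv)

open Classical in
/-- The extension of `rec` by `0` off the presynaptic nodes of `v` is never read by
`potential`. -/
def spikeStep (G : NetworkGraph V) (w d : V × V → ℝ) (tin : V → ℝ) (v : V)
    (rec : ∀ u, (u, v) ∈ G.E → ℝ) : ℝ :=
  if v ∈ G.Vin then tin v
  else sInf {s | potential G w d (fun u => if h : (u, v) ∈ G.E then rec u h else 0) v s = 1}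

def spikeRec (G : NetworkGraph V) (w d : V × V → ℝ) (tin : V → ℝ) : V → ℝ :=
  G.acyclic.fix (spikeStep G w d tin)

open Classical in
theorem spikeRec_eq (G : NetworkGraph V) (w d : V × V → ℝ) (tin : V → ℝ) (v : V) :
    spikeRec G w d tin v = if v ∈ G.Vin then tin v
      else sInf {s | potential G w d (spikeRec G w d tin) v s = 1} := by
  refine (G.acyclic.fix_eq (spikeStep G w d tin) v).trans ?_
  rw [spikeStep, potential_congr G w d (t' := G.acyclic.fix (spikeStep G w d tin))
    fun u hu => dif_pos hu]
  rfl

theorem isSpikeMap_spikeRec (G : NetworkGraph V) {w : V × V → ℝ} (d : V × V → ℝ)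
    (hw : ∀ e ∈ G.E, 0 ≤ w e) (hpos : ∀ v : V, v ∉ G.Vin → ∃ u, (u, v) ∈ G.E ∧ 0 < w (u, v))
    (tin : V → ℝ) : IsSpikeMap G w d tin (spikeRec G w d tin) := by
  refine ⟨fun v hv => by rw [spikeRec_eq, if_pos hv], fun v hv => ?_⟩
  obtain ⟨u₀, hu₀, hw₀⟩ := hpos v hv
  obtain ⟨s, hs⟩ := exists_isLeast_potential_eq_one G d hw hu₀ hw₀ (spikeRec G w d tin)
  rwa [spikeRec_eq, if_neg hv, hs.csInf_eq]

end

theorem statement0_general {V : Type} [Fintype V] [DecidableEq V]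
    (G : NetworkGraph V) (w d : V × V → ℝ)
    (hw : ∀ e ∈ G.E, 0 ≤ w e)
    (hpos : ∀ v : V, v ∉ G.Vin → ∃ u, (u, v) ∈ G.E ∧ 0 < w (u, v))
    (tin : V → ℝ) :
    ∃! t : V → ℝ, IsSpikeMap G w d tin t :=
  ⟨spikeRec G w d tin, isSpikeMap_spikeRec G d hw hpos tin,
    fun _ ht => IsSpikeMap.unique G ht (isSpikeMap_spikeRec G d hw hpos tin)⟩

/-- Lemma: well-definedness of potentials and spike times.
For an SNN on a network graph with nonnegative weights, nonnegative delays, ReLU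
responses, and a positive-weight incoming synapse at every non-input node, for any
input spike times there is a unique consistent assignment of spike times; in
particular, for every non-input node the set `{t : P_v(t) = 1}` is nonempty and its
minimum exists and is unique. -/
theorem statement0 {V : Type} [Fintype V] [DecidableEq V]
    (G : NetworkGraph V) (w d : V × V → ℝ)
    (hw : ∀ e ∈ G.E, 0 ≤ w e) (hd : ∀ e ∈ G.E, 0 ≤ d e)
    (hpos : ∀ v : V, v ∉ G.Vin → ∃ u, (u, v) ∈ G.E ∧ 0 < w (u, v))
    (tin : V → ℝ) :
    ∃! t : V → ℝ, IsSpikeMap G w d tin t :=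
  statement0_general G w d hw hpos tin
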